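/- arXiv:2301.09981 — 4 statements merged into one kernel-verified Lean document; each statement's English description precedes it below -/
import Mathlib

section
/- Lemma (error recursion under compression and censoring). In CC-DQM with a deterministic δ-contractive compressor, 0 ≤ δ < 1, the stacked error e_k = y_k − x_k satisfies, for every k ≥ 0, ‖e_{k+1}‖² ≤ √δ ‖e_k‖² + (δ/(1−√δ)) ‖x_{k+1} − x_k‖² + n μ_{k+1}². -/
open scoped RealInnerProductSpace BigOperators

noncomputable section

/-- Blockwise action of a matrix `A` on stacked vectors in `(ℝ^d)^n ≅ ℝ^{nd}`
(i.e. the action of `A ⊗ I_d`). -/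
def blockMul {m n d : ℕ} (A : Matrix (Fin m) (Fin n) ℝ)
    (z : Fin n → EuclideanSpace ℝ (Fin d)) : Fin m → EuclideanSpace ℝ (Fin d) :=
  fun i => ∑ j, A i j • z j

/-- `t` is an eigenvalue of the real matrix `A`. -/
def IsEigenvalue {n : ℕ} (A : Matrix (Fin n) (Fin n) ℝ) (t : ℝ) : Prop :=
  ∃ z : Fin n → ℝ, z ≠ 0 ∧ A.mulVec z = t • z

/-- The signed Laplacian `L = D - W` of a graph. -/
def signedLap {n : ℕ} (G : SimpleGraph (Fin n)) [DecidableRel G.Adj] :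
    Matrix (Fin n) (Fin n) ℝ :=
  Matrix.diagonal (fun i => (G.degree i : ℝ)) - G.adjMatrix ℝ

/-- The unsigned Laplacian `L_s = D + W` of a graph. -/
def unsignedLap {n : ℕ} (G : SimpleGraph (Fin n)) [DecidableRel G.Adj] :
    Matrix (Fin n) (Fin n) ℝ :=
  Matrix.diagonal (fun i => (G.degree i : ℝ)) + G.adjMatrix ℝ

/-- The CC-DQM iteration: initializations `y₀ = 0`, `φ₀ = 0`, the primal update
`x_{i,k+1} = x_{i,k} - (2 c dᵢ I + ∇²fᵢ(y_{i,k}))⁻¹ (∇fᵢ(x_{i,k}) + c Σ_{j ∈ Nᵢ} (y_{i,k} - y_{j,k}) + φ_{i,k})`,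
the censored/compressed state update for `y`, and the dual update for `φ`. -/
def IsCCDQM {n d : ℕ} (G : SimpleGraph (Fin n)) [DecidableRel G.Adj]
    (f : Fin n → EuclideanSpace ℝ (Fin d) → ℝ) (c : ℝ) (μ : ℕ → ℝ)
    (C : EuclideanSpace ℝ (Fin d) → EuclideanSpace ℝ (Fin d))
    (x y φ : ℕ → Fin n → EuclideanSpace ℝ (Fin d)) : Prop :=
  (∀ i, y 0 i = 0) ∧ (∀ i, φ 0 i = 0) ∧
  (∀ k i, x (k+1) i = x k i -
      Ring.inverse ((2 * c * (G.degree i : ℝ)) •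
            (1 : EuclideanSpace ℝ (Fin d) →L[ℝ] EuclideanSpace ℝ (Fin d))
          + fderiv ℝ (gradient (f i)) (y k i))
        (gradient (f i) (x k i)
          + c • ∑ j ∈ G.neighborFinset i, (y k i - y k j) + φ k i)) ∧
  (∀ k i, y (k+1) i =
      if μ (k+1) ≤ ‖x (k+1) i - y k i‖ then y k i + C (x (k+1) i - y k i) else y k i) ∧
  (∀ k i, φ (k+1) i = φ k i + c • ∑ j ∈ G.neighborFinset i, (y (k+1) i - y (k+1) j))

/- Young's inequality `(p + q)² ≤ (1 + ε) p² + (1 + 1/ε) q²` with `ε = (1 - √δ)/√δ`; multiplied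
by `(1 - √δ)` the gap is `√δ ((1 - √δ) p - √δ q)²`. -/
theorem mul_add_sq_le_sqrt_mul_add {δ : ℝ} (hδ0 : 0 ≤ δ) (hδ1 : δ < 1) (p q : ℝ) :
    δ * (p + q) ^ 2 ≤ Real.sqrt δ * p ^ 2 + δ / (1 - Real.sqrt δ) * q ^ 2 := by
  set s := Real.sqrt δ
  have hs0 : 0 ≤ s := Real.sqrt_nonneg δ
  have hsq : s ^ 2 = δ := Real.sq_sqrt hδ0
  have h1s : 0 < 1 - s := by nlinarith
  rw [← hsq, div_mul_eq_mul_div, ← sub_nonneg]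
  have key : s * p ^ 2 + s ^ 2 * q ^ 2 / (1 - s) - s ^ 2 * (p + q) ^ 2
      = s * ((1 - s) * p - s * q) ^ 2 / (1 - s) := by
    field_simp
    ring
  rw [key]
  positivity

theorem mul_norm_sub_sq_le_sqrt_mul_add {E : Type*} [SeminormedAddCommGroup E]
    {δ : ℝ} (hδ0 : 0 ≤ δ) (hδ1 : δ < 1) (a b c : E) :
    δ * ‖a - b‖ ^ 2 ≤ Real.sqrt δ * ‖b - c‖ ^ 2 + δ / (1 - Real.sqrt δ) * ‖a - c‖ ^ 2 := by
  have htri : ‖a - b‖ ≤ ‖b - c‖ + ‖a - c‖ := by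
    rw [add_comm, norm_sub_rev b c]
    exact norm_sub_le_norm_sub_add_norm_sub a c b
  calc δ * ‖a - b‖ ^ 2 ≤ δ * (‖b - c‖ + ‖a - c‖) ^ 2 := by gcongr
    _ ≤ _ := mul_add_sq_le_sqrt_mul_add hδ0 hδ1 _ _

theorem norm_censored_compress_sub_sq_le {E : Type*} [SeminormedAddCommGroup E]
    {δ : ℝ} (hδ0 : 0 ≤ δ) {C : E → E} (hC : ∀ z, ‖C z - z‖ ^ 2 ≤ δ * ‖z‖ ^ 2)
    (μ : ℝ) (x' y : E) :
    ‖(if μ ≤ ‖x' - y‖ then y + C (x' - y) else y) - x'‖ ^ 2 ≤ δ * ‖x' - y‖ ^ 2 + μ ^ 2 := by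
  split_ifs with hsend
  · have hcomp : y + C (x' - y) - x' = C (x' - y) - (x' - y) := by abel
    rw [hcomp]
    nlinarith [hC (x' - y), sq_nonneg μ]
  · have hsmall : ‖y - x'‖ ≤ μ := by
      rw [norm_sub_rev]
      exact (not_le.mp hsend).le
    nlinarith [norm_nonneg (y - x'), norm_nonneg (x' - y), mul_nonneg hδ0 (sq_nonneg ‖x' - y‖)]

theorem ccdqm_error_recursion_general
    {n d : ℕ} (G : SimpleGraph (Fin n)) [DecidableRel G.Adj]
    (f : Fin n → EuclideanSpace ℝ (Fin d) → ℝ)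
    (c δ : ℝ) (hδ0 : 0 ≤ δ) (hδ1 : δ < 1)
    (C : EuclideanSpace ℝ (Fin d) → EuclideanSpace ℝ (Fin d))
    (hC : ∀ z, ‖C z - z‖ ^ 2 ≤ δ * ‖z‖ ^ 2)
    (μ : ℕ → ℝ)
    (x y φ : ℕ → Fin n → EuclideanSpace ℝ (Fin d))
    (halg : IsCCDQM G f c μ C x y φ) :
    ∀ k : ℕ,
      (∑ i, ‖y (k+1) i - x (k+1) i‖ ^ 2) ≤
        Real.sqrt δ * (∑ i, ‖y k i - x k i‖ ^ 2)
          + δ / (1 - Real.sqrt δ) * (∑ i, ‖x (k+1) i - x k i‖ ^ 2)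
          + n * μ (k+1) ^ 2 := by
  intro k
  have hagent : ∀ i, ‖y (k+1) i - x (k+1) i‖ ^ 2 ≤ Real.sqrt δ * ‖y k i - x k i‖ ^ 2
      + δ / (1 - Real.sqrt δ) * ‖x (k+1) i - x k i‖ ^ 2 + μ (k+1) ^ 2 := fun i => by
    rw [halg.2.2.2.1 k i]
    linarith [norm_censored_compress_sub_sq_le hδ0 hC (μ (k+1)) (x (k+1) i) (y k i),
      mul_norm_sub_sq_le_sqrt_mul_add hδ0 hδ1 (x (k+1) i) (y k i) (x k i)]
  calc (∑ i, ‖y (k+1) i - x (k+1) i‖ ^ 2)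
      ≤ ∑ i, (Real.sqrt δ * ‖y k i - x k i‖ ^ 2
          + δ / (1 - Real.sqrt δ) * ‖x (k+1) i - x k i‖ ^ 2 + μ (k+1) ^ 2) :=
        Finset.sum_le_sum fun i _ => hagent i
    _ = _ := by simp [Finset.sum_add_distrib, ← Finset.mul_sum]

/-- **Lemma 1** (error recursion under compression and censoring). In CC-DQM with a
deterministic `δ`-contractive compressor, the stacked error `e_k = y_k - x_k` satisfies
`‖e_{k+1}‖² ≤ √δ ‖e_k‖² + (δ/(1-√δ)) ‖x_{k+1} - x_k‖² + n μ_{k+1}²`. -/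
theorem ccdqm_error_recursion
    {n d : ℕ} (G : SimpleGraph (Fin n)) [DecidableRel G.Adj] (hconn : G.Connected)
    (f : Fin n → EuclideanSpace ℝ (Fin d) → ℝ)
    (hf : ∀ i, ContDiff ℝ 2 (f i))
    (c δ : ℝ) (hc : 0 < c) (hδ0 : 0 ≤ δ) (hδ1 : δ < 1)
    (C : EuclideanSpace ℝ (Fin d) → EuclideanSpace ℝ (Fin d))
    (hC : ∀ z, ‖C z - z‖ ^ 2 ≤ δ * ‖z‖ ^ 2)
    (μ : ℕ → ℝ) (hμ : ∀ k, 0 ≤ μ k)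
    (x y φ : ℕ → Fin n → EuclideanSpace ℝ (Fin d))
    (halg : IsCCDQM G f c μ C x y φ) :
    ∀ k : ℕ,
      (∑ i, ‖y (k+1) i - x (k+1) i‖ ^ 2) ≤
        Real.sqrt δ * (∑ i, ‖y k i - x k i‖ ^ 2)
          + δ / (1 - Real.sqrt δ) * (∑ i, ‖x (k+1) i - x k i‖ ^ 2)
          + n * μ (k+1) ^ 2 :=
  ccdqm_error_recursion_general G f c δ hδ0 hδ1 C hC μ x y φ halg
end
end

section
/- Dual residual bound. Let c > 0, γ = 2ℓ > 0, and suppose vectors g, Δ, e, e', w and matrices L, L_s, M (all acting blockwise on ℝ^{nd}) satisfy the identity g + c L_s Δx + Δ = c L (e' − e) − 2 c Mᵀ w, where: ‖g‖ ≤ ℓ‖x_+ − x*‖ (g is a difference of gradients of an ℓ-smooth function at x_+ and x*), ‖Δ‖ ≤ γ‖Δx‖ with Δx = x_+ − x_−, ‖L_s z‖ ≤ λ̂ₙ‖z‖ and ‖L z‖ ≤ λₙ‖z‖ for all z, MᵀM = 2L, λ₂ > 0 is the smallest positive eigenvalue of L, and w lies in the range of M (blockwise). Then ‖w‖² ≤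 ((c² λ̂ₙ² + γ²)/(c² λ₂)) ‖Δx‖² + (λₙ²/(2 λ₂)) (‖e‖² + ‖e'‖²) + (ℓ²/(2 c² λ₂)) ‖x_+ − x*‖². -/
open scoped BigOperators
open Matrix

noncomputable section

/-- The Euclidean norm of a stacked vector. -/
def stackNorm {n d : ℕ} (z : Fin n → EuclideanSpace ℝ (Fin d)) : ℝ :=
  Real.sqrt (∑ i, ‖z i‖ ^ 2)

/-! Solving the identity for `2c Mᵀw` and applying the triangle inequality gives
`2c ‖Mᵀw‖ ≤ c λₙ (‖e‖ + ‖e'‖) + ℓ ‖x₊ - x*‖ + (c λ̂ₙ + γ) ‖Δx‖`, and squaring costs the factors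
`(a + b + x + y)² ≤ 4 (a² + b² + x² + y²)` and `(p + q)² ≤ 2 (p² + q²)`.
On the other side, writing `w = M z`, one has `‖w‖² = 2 ⟨z, L z⟩` and `Mᵀw = 2 L z`; since every
eigenvalue `μ` of `L` is `0` or at least `λ₂`, the matrix `L² - λ₂ L` (eigenvalues `μ² - λ₂ μ`) is
positive semidefinite, so `‖Mᵀw‖² = 4 ‖L z‖² ≥ 4 λ₂ ⟨z, L z⟩ = 2 λ₂ ‖w‖²`, coordinate by
coordinate in `ℝ^d`. -/

namespace Matrix

variable {m n : Type*} [Fintype m] [Fintype n] [DecidableEq n]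

theorem PosSemidef.posSemidef_mul_self_sub_smul {L : Matrix n n ℝ} (hL : L.PosSemidef) {t : ℝ}
    (ht : ∀ i, 0 < hL.1.eigenvalues i → t ≤ hL.1.eigenvalues i) :
    (L * L - t • L).PosSemidef := by
  set D : Matrix n n ℝ := diagonal (RCLike.ofReal ∘ hL.1.eigenvalues)
  have hconj : L * L - t • L =
      Unitary.conjStarAlgAut ℝ _ hL.1.eigenvectorUnitary (D * D - t • D) := by
    rw [map_sub, map_mul, map_smul, ← hL.1.spectral_theorem]
  rw [hconj, Unitary.conjStarAlgAut_apply, Unitary.isUnit_coe.posSemidef_star_right_conjugate_iff,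
    diagonal_mul_diagonal, ← diagonal_smul, diagonal_sub, posSemidef_diagonal_iff]
  intro i
  simp only [Pi.smul_apply, Function.comp_apply, RCLike.ofReal_real_eq_id, id, smul_eq_mul]
  rcases (hL.eigenvalues_nonneg i).eq_or_lt with h | h
  · simp [← h]
  · nlinarith [ht i h]

theorem PosSemidef.mul_dotProduct_mulVec_le {L : Matrix n n ℝ} (hL : L.PosSemidef) {t : ℝ}
    (ht : ∀ i, 0 < hL.1.eigenvalues i → t ≤ hL.1.eigenvalues i) (u : n → ℝ) :
    t * (u ⬝ᵥ L *ᵥ u) ≤ L *ᵥ u ⬝ᵥ L *ᵥ u := by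
  have h := (hL.posSemidef_mul_self_sub_smul ht).dotProduct_mulVec_nonneg u
  have hsymm : Lᵀ = L := by simpa [conjTranspose_eq_transpose_of_trivial] using hL.1.eq
  rw [star_trivial, sub_mulVec, ← mulVec_mulVec, smul_mulVec, dotProduct_sub, dotProduct_smul,
    dotProduct_mulVec u L, ← mulVec_transpose, hsymm, smul_eq_mul] at h
  linarith

theorem PosSemidef.two_mul_dotProduct_le_of_transpose_mul_self_eq {L : Matrix n n ℝ}
    (hL : L.PosSemidef) {t : ℝ} (ht : ∀ i, 0 < hL.1.eigenvalues i → t ≤ hL.1.eigenvalues i)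
    {M : Matrix m n ℝ} (hM : Mᵀ * M = (2 : ℝ) • L) (u : n → ℝ) :
    2 * t * (M *ᵥ u ⬝ᵥ M *ᵥ u) ≤ Mᵀ *ᵥ (M *ᵥ u) ⬝ᵥ Mᵀ *ᵥ (M *ᵥ u) := by
  have hMtM : Mᵀ *ᵥ (M *ᵥ u) = (2 : ℝ) • (L *ᵥ u) := by rw [mulVec_mulVec, hM, smul_mulVec]
  have hMM : M *ᵥ u ⬝ᵥ M *ᵥ u = 2 * (u ⬝ᵥ L *ᵥ u) :=
    calc M *ᵥ u ⬝ᵥ M *ᵥ u = u ⬝ᵥ Mᵀ *ᵥ (M *ᵥ u) := by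
          rw [dotProduct_mulVec, ← mulVec_transpose, dotProduct_comm]
      _ = 2 * (u ⬝ᵥ L *ᵥ u) := by rw [hMtM, dotProduct_smul, smul_eq_mul]
  rw [hMM, hMtM, smul_dotProduct, dotProduct_smul, smul_eq_mul, smul_eq_mul]
  nlinarith [hL.mul_dotProduct_mulVec_le ht u]

theorem IsHermitian.isEigenvalue_eigenvalues {k : ℕ} {L : Matrix (Fin k) (Fin k) ℝ}
    (hL : L.IsHermitian) (i : Fin k) : IsEigenvalue L (hL.eigenvalues i) :=
  ⟨_, fun h => hL.eigenvectorBasis.orthonormal.ne_zero i (WithLp.ofLp_injective 2 h),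
    hL.mulVec_eigenvectorBasis i⟩

end Matrix

theorem sum_norm_sq_eq_sum_dotProduct {ι κ : Type*} [Fintype ι] [Fintype κ]
    (z : ι → EuclideanSpace ℝ κ) :
    ∑ i, ‖z i‖ ^ 2 = ∑ k, (fun i => z i k) ⬝ᵥ fun i => z i k := by
  simp_rw [EuclideanSpace.norm_sq_eq, Real.norm_eq_abs, sq_abs, dotProduct, ← sq]
  exact Finset.sum_comm

theorem norm_toLp_sq {ι κ : Type*} [Fintype ι] [Fintype κ] (z : ι → EuclideanSpace ℝ κ) :
    ‖WithLp.toLp 2 z‖ ^ 2 = ∑ i, ‖z i‖ ^ 2 :=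
  PiLp.norm_sq_eq_of_L2 _ _

theorem two_mul_norm_le_of_add_smul_add_eq {E : Type*} [SeminormedAddCommGroup E]
    [NormedSpace ℝ E] {c : ℝ} (hc : 0 < c) {a b g δ v : E}
    (h : g + c • b + δ = c • a - (2 * c) • v) :
    2 * c * ‖v‖ ≤ c * ‖a‖ + ‖g‖ + c * ‖b‖ + ‖δ‖ := by
  have hv : (2 * c) • v = c • a - g - c • b - δ := by linear_combination (norm := module) h
  calc 2 * c * ‖v‖ = ‖c • a - g - c • b - δ‖ := by
        rw [← hv, norm_smul, Real.norm_of_nonneg (by positivity)]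
    _ ≤ ‖c • a‖ + ‖g‖ + ‖c • b‖ + ‖δ‖ := by
        linarith [norm_sub_le (c • a - g - c • b) δ, norm_sub_le (c • a - g) (c • b),
          norm_sub_le (c • a) g]
    _ = c * ‖a‖ + ‖g‖ + c * ‖b‖ + ‖δ‖ := by rw [norm_smul, norm_smul, Real.norm_of_nonneg hc.le]

theorem two_mul_sq_mul_le_of_two_mul_le_add {c t N S a b x y : ℝ} (hc : 0 ≤ c) (hN : 0 ≤ N)
    (hS : 2 * t * S ≤ N ^ 2) (h : 2 * c * N ≤ a + b + x + y) :
    2 * c ^ 2 * t * S ≤ a ^ 2 + b ^ 2 + x ^ 2 + y ^ 2 := by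
  have hsq : (2 * c * N) ^ 2 ≤ (a + b + x + y) ^ 2 := pow_le_pow_left₀ (by positivity) h 2
  have hfour : (a + b + x + y) ^ 2 ≤ 4 * (a ^ 2 + b ^ 2 + x ^ 2 + y ^ 2) := by
    nlinarith [add_sq_le (a := a + b) (b := x + y), add_sq_le (a := a) (b := b),
      add_sq_le (a := x) (b := y)]
  nlinarith [mul_le_mul_of_nonneg_left hS (sq_nonneg c)]

theorem dual_residual_bound_of_norms {c t lamn lhn ℓ γ N S A B D X : ℝ} (hc : 0 < c)
    (ht : 0 < t) (hN : 0 ≤ N) (hS : 2 * t * S ≤ N ^ 2)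
    (h : 2 * c * N ≤ c * lamn * (B + A) + ℓ * X + (c * lhn + γ) * D) :
    S ≤ (c ^ 2 * lhn ^ 2 + γ ^ 2) / (c ^ 2 * t) * D ^ 2 + lamn ^ 2 / (2 * t) * (A ^ 2 + B ^ 2)
      + ℓ ^ 2 / (2 * c ^ 2 * t) * X ^ 2 := by
  have hsum := two_mul_sq_mul_le_of_two_mul_le_add hc.le hN hS
    (a := c * lamn * A) (b := c * lamn * B) (x := ℓ * X) (y := (c * lhn + γ) * D) (by linarith)
  have hγ : (c * lhn + γ) ^ 2 * D ^ 2 ≤ 2 * (c ^ 2 * lhn ^ 2 + γ ^ 2) * D ^ 2 := by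
    nlinarith [add_sq_le (a := c * lhn) (b := γ), sq_nonneg D]
  rw [show (c ^ 2 * lhn ^ 2 + γ ^ 2) / (c ^ 2 * t) * D ^ 2 + lamn ^ 2 / (2 * t) * (A ^ 2 + B ^ 2)
      + ℓ ^ 2 / (2 * c ^ 2 * t) * X ^ 2 = (2 * (c ^ 2 * lhn ^ 2 + γ ^ 2) * D ^ 2
      + c ^ 2 * lamn ^ 2 * (A ^ 2 + B ^ 2) + ℓ ^ 2 * X ^ 2) / (2 * c ^ 2 * t) by
    field_simp, le_div_iff₀ (by positivity)]
  linarith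

section Blocks

variable {m n d : ℕ}

theorem blockMul_coord_eq_mulVec (A : Matrix (Fin m) (Fin n) ℝ)
    (z : Fin n → EuclideanSpace ℝ (Fin d)) (k : Fin d) :
    (fun i => blockMul A z i k) = A *ᵥ fun j => z j k := by
  ext i
  simp [blockMul, mulVec, dotProduct]

theorem stackNorm_eq_norm_toLp (z : Fin n → EuclideanSpace ℝ (Fin d)) :
    stackNorm z = ‖WithLp.toLp 2 z‖ := by
  rw [stackNorm, PiLp.norm_eq_of_L2]

theorem two_mul_sum_norm_sq_blockMul_le {L : Matrix (Fin n) (Fin n) ℝ} (hL : L.PosSemidef)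
    {t : ℝ} (ht : ∀ s, IsEigenvalue L s → 0 < s → t ≤ s) {M : Matrix (Fin m) (Fin n) ℝ}
    (hM : Mᵀ * M = (2 : ℝ) • L) (z : Fin n → EuclideanSpace ℝ (Fin d)) :
    2 * t * ∑ i, ‖blockMul M z i‖ ^ 2 ≤ ∑ j, ‖blockMul Mᵀ (blockMul M z) j‖ ^ 2 := by
  simp only [sum_norm_sq_eq_sum_dotProduct, blockMul_coord_eq_mulVec, Finset.mul_sum]
  exact Finset.sum_le_sum fun k _ => hL.two_mul_dotProduct_le_of_transpose_mul_self_eq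
    (fun i hi => ht _ (hL.1.isEigenvalue_eigenvalues i) hi) hM _

end Blocks

theorem dual_residual_bound_general
    {n m d : ℕ}
    (L Ls : Matrix (Fin n) (Fin n) ℝ) (M : Matrix (Fin m) (Fin n) ℝ)
    (hL : L.PosSemidef)
    (hM : Mᵀ * M = (2 : ℝ) • L)
    (c ℓ γ lam2 lamn lhn : ℝ)
    (hc : 0 < c)
    (hlam2 : IsEigenvalue L lam2 ∧ 0 < lam2 ∧
      ∀ t, IsEigenvalue L t → 0 < t → lam2 ≤ t)
    (hlamn : ∀ z : Fin n → EuclideanSpace ℝ (Fin d),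
      stackNorm (blockMul L z) ≤ lamn * stackNorm z)
    (hlhn : ∀ z : Fin n → EuclideanSpace ℝ (Fin d),
      stackNorm (blockMul Ls z) ≤ lhn * stackNorm z)
    (g Δ e e' xp xm xstar : Fin n → EuclideanSpace ℝ (Fin d))
    (w : Fin m → EuclideanSpace ℝ (Fin d))
    (hg : stackNorm g ≤ ℓ * stackNorm (fun i => xp i - xstar i))
    (hΔ : stackNorm Δ ≤ γ * stackNorm (fun i => xp i - xm i))
    (hw : ∃ z : Fin n → EuclideanSpace ℝ (Fin d), w = blockMul M z)
    (hid : ∀ i, g i + c • blockMul Ls (fun j => xp j - xm j) i + Δ i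
      = c • blockMul L (fun j => e' j - e j) i - (2 * c) • blockMul Mᵀ w i) :
    (∑ j, ‖w j‖ ^ 2) ≤
      (c ^ 2 * lhn ^ 2 + γ ^ 2) / (c ^ 2 * lam2) * ∑ i, ‖xp i - xm i‖ ^ 2
      + lamn ^ 2 / (2 * lam2) * ((∑ i, ‖e i‖ ^ 2) + ∑ i, ‖e' i‖ ^ 2)
      + ℓ ^ 2 / (2 * c ^ 2 * lam2) * ∑ i, ‖xp i - xstar i‖ ^ 2 := by
  obtain ⟨-, hlam2, hgap⟩ := hlam2
  obtain ⟨z, rfl⟩ := hw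
  simp only [stackNorm_eq_norm_toLp] at hlamn hlhn hg hΔ
  set Δx : Fin n → EuclideanSpace ℝ (Fin d) := fun j => xp j - xm j
  set V := blockMul Mᵀ (blockMul M z)
  have hspec : 2 * lam2 * ∑ j, ‖blockMul M z j‖ ^ 2 ≤ ‖WithLp.toLp 2 V‖ ^ 2 :=
    (two_mul_sum_norm_sq_blockMul_le hL hgap hM z).trans_eq (norm_toLp_sq V).symm
  have htri := two_mul_norm_le_of_add_smul_add_eq hc
    (a := WithLp.toLp 2 (blockMul L (e' - e))) (b := WithLp.toLp 2 (blockMul Ls Δx))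
    (g := WithLp.toLp 2 g) (δ := WithLp.toLp 2 Δ) (v := WithLp.toLp 2 V)
    (congrArg (WithLp.toLp 2) (funext hid))
  have hLed : ‖WithLp.toLp 2 (blockMul L (e' - e))‖ ≤
      |lamn| * (‖WithLp.toLp 2 e'‖ + ‖WithLp.toLp 2 e‖) :=
    (hlamn _).trans (mul_le_mul (le_abs_self _) (norm_sub_le _ _) (norm_nonneg _) (abs_nonneg _))
  have hLsΔx : ‖WithLp.toLp 2 (blockMul Ls Δx)‖ ≤ |lhn| * ‖WithLp.toLp 2 Δx‖ :=
    (hlhn _).trans (mul_le_mul_of_nonneg_right (le_abs_self _) (norm_nonneg _))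
  have hV : 2 * c * ‖WithLp.toLp 2 V‖ ≤ c * |lamn| * (‖WithLp.toLp 2 e'‖ + ‖WithLp.toLp 2 e‖)
      + ℓ * ‖WithLp.toLp 2 (fun i => xp i - xstar i)‖ + (c * |lhn| + γ) * ‖WithLp.toLp 2 Δx‖ := by
    linarith [mul_le_mul_of_nonneg_left hLed hc.le, mul_le_mul_of_nonneg_left hLsΔx hc.le]
  simpa only [norm_toLp_sq, sq_abs] using
    dual_residual_bound_of_norms hc hlam2 (norm_nonneg _) hspec hV

/-- **Dual residual bound.** From the identity
`g + c L_s Δx + Δ = c L (e' - e) - 2 c Mᵀ w` together with the stated norm bounds,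
`MᵀM = 2L` and `w` in the blockwise range of `M`, one obtains
`‖w‖² ≤ ((c² λ̂ₙ² + γ²)/(c² λ₂)) ‖Δx‖² + (λₙ²/(2λ₂)) (‖e‖² + ‖e'‖²) + (ℓ²/(2c²λ₂)) ‖x₊ - x*‖²`. -/
theorem dual_residual_bound
    {n m d : ℕ}
    (L Ls : Matrix (Fin n) (Fin n) ℝ) (M : Matrix (Fin m) (Fin n) ℝ)
    (hL : L.PosSemidef) (hLs : Ls.IsHermitian)
    (hM : Mᵀ * M = (2 : ℝ) • L)
    (c ℓ γ lam2 lamn lhn : ℝ)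
    (hc : 0 < c) (hℓ : 0 < ℓ) (hγ : γ = 2 * ℓ)
    (hlam2 : IsEigenvalue L lam2 ∧ 0 < lam2 ∧
      ∀ t, IsEigenvalue L t → 0 < t → lam2 ≤ t)
    (hlamn : ∀ z : Fin n → EuclideanSpace ℝ (Fin d),
      stackNorm (blockMul L z) ≤ lamn * stackNorm z)
    (hlhn : ∀ z : Fin n → EuclideanSpace ℝ (Fin d),
      stackNorm (blockMul Ls z) ≤ lhn * stackNorm z)
    (g Δ e e' xp xm xstar : Fin n → EuclideanSpace ℝ (Fin d))
    (w : Fin m → EuclideanSpace ℝ (Fin d))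
    (hg : stackNorm g ≤ ℓ * stackNorm (fun i => xp i - xstar i))
    (hΔ : stackNorm Δ ≤ γ * stackNorm (fun i => xp i - xm i))
    (hw : ∃ z : Fin n → EuclideanSpace ℝ (Fin d), w = blockMul M z)
    (hid : ∀ i, g i + c • blockMul Ls (fun j => xp j - xm j) i + Δ i
      = c • blockMul L (fun j => e' j - e j) i - (2 * c) • blockMul Mᵀ w i) :
    (∑ j, ‖w j‖ ^ 2) ≤
      (c ^ 2 * lhn ^ 2 + γ ^ 2) / (c ^ 2 * lam2) * ∑ i, ‖xp i - xm i‖ ^ 2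
      + lamn ^ 2 / (2 * lam2) * ((∑ i, ‖e i‖ ^ 2) + ∑ i, ‖e' i‖ ^ 2)
      + ℓ ^ 2 / (2 * c ^ 2 * lam2) * ∑ i, ‖xp i - xstar i‖ ^ 2 :=
  dual_residual_bound_general L Ls M hL hM c ℓ γ lam2 lamn lhn hc hlam2 hlamn hlhn g Δ e e' xp xm
    xstar w hg hΔ hw hid
end
end

section
/- Maximizer of the limiting condition function. Let λ₂, λₙ, λ̂₁, λ̂ₙ > 0, set u = λ̂ₙ²/(λ₂ λ̂₁), and define for β > 0 the function F∞(β) = (λ̂₁/2 − λ̂ₙ²/(β λ₂)) / (3λₙ + 2βλₙ + λₙ²/(β λ₂)). Then β* = 2u + √(4u² + λₙ/(2λ₂) + 3u) satisfies F∞(β) ≤ F∞(β*) for all β > 0; that is, β* is a global maximizer of F∞ on (0, ∞). -/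
/-!
Clearing the denominators `β λ₂` turns `F∞` into a ratio `(aβ - b) / (pβ² + qβ + r)` of a linear
and a quadratic polynomial. For such a ratio one has the identity
`(a y - b) D(x) - (a x - b) D(y) = (x - y) (a p x y - a r - b p (x + y) - b q)`, and at a stationary
point `y` (where `a p y² - 2 b p y = a r + b q`) the right-hand side collapses to
`p (x - y)² (a y - b) ≥ 0`. The stationarity equation here is `β² = 4uβ + 3u + λₙ/(2λ₂)`,
whose positive root is `β*`.
-/

lemma div_quadratic_le_of_stationary {a b p q r x y : ℝ} (hp : 0 ≤ p) (hy : b ≤ a * y)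
    (hstat : a * p * y ^ 2 - 2 * b * p * y = a * r + b * q)
    (hDx : 0 < p * x ^ 2 + q * x + r) (hDy : 0 < p * y ^ 2 + q * y + r) :
    (a * x - b) / (p * x ^ 2 + q * x + r) ≤ (a * y - b) / (p * y ^ 2 + q * y + r) := by
  rw [div_le_div_iff₀ hDx hDy]
  have hgap : (a * y - b) * (p * x ^ 2 + q * x + r) - (a * x - b) * (p * y ^ 2 + q * y + r)
      = p * (x - y) ^ 2 * (a * y - b) := by
    linear_combination (x - y) * hstat
  linarith [mul_nonneg (mul_nonneg hp (sq_nonneg (x - y))) (sub_nonneg.mpr hy)]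

lemma sq_eq_of_eq_add_sqrt {c s y : ℝ} (hs : 0 ≤ s) (hy : y = c + √s) :
    y ^ 2 = 2 * c * y + (s - c ^ 2) := by
  rw [hy]
  linear_combination Real.sq_sqrt hs

lemma limiting_ratio_eq_div_quadratic {lam2 lamn lh1 lhn β : ℝ} (hlam2 : lam2 ≠ 0) (hβ : β ≠ 0) :
    (lh1 / 2 - lhn ^ 2 / (β * lam2)) / (3 * lamn + 2 * β * lamn + lamn ^ 2 / (β * lam2))
      = (lh1 * lam2 / 2 * β - lhn ^ 2)
          / (2 * lam2 * lamn * β ^ 2 + 3 * lam2 * lamn * β + lamn ^ 2) := by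
  rw [← mul_div_mul_right _ _ (mul_ne_zero hβ hlam2)]
  congr 1
  · field_simp
  · field_simp; ring

theorem limiting_condition_function_maximizer_general
    (lam2 lamn lh1 lhn : ℝ)
    (hlam2 : 0 < lam2) (hlamn : 0 < lamn) (hlh1 : 0 < lh1)
    (u βstar : ℝ)
    (hu : u = lhn ^ 2 / (lam2 * lh1))
    (hβstar : βstar = 2 * u + Real.sqrt (4 * u ^ 2 + lamn / (2 * lam2) + 3 * u)) :
    ∀ β : ℝ, 0 < β →
      (lh1 / 2 - lhn ^ 2 / (β * lam2)) / (3 * lamn + 2 * β * lamn + lamn ^ 2 / (β * lam2))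
        ≤ (lh1 / 2 - lhn ^ 2 / (βstar * lam2)) /
            (3 * lamn + 2 * βstar * lamn + lamn ^ 2 / (βstar * lam2)) := by
  intro β hβ
  have hu0 : 0 ≤ u := hu ▸ by positivity
  have hrad : 0 < 4 * u ^ 2 + lamn / (2 * lam2) + 3 * u := by positivity
  have hβstar0 : 0 < βstar := hβstar ▸ by positivity
  have hβstar2u : 2 * u ≤ βstar := hβstar ▸ le_add_of_nonneg_right (Real.sqrt_nonneg _)
  have hquad := sq_eq_of_eq_add_sqrt hrad.le hβstar
  have hlhn : lhn ^ 2 = 2 * u * (lh1 * lam2 / 2) := by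
    rw [hu]; field_simp
  rw [limiting_ratio_eq_div_quadratic hlam2.ne' hβ.ne',
    limiting_ratio_eq_div_quadratic hlam2.ne' hβstar0.ne']
  apply div_quadratic_le_of_stationary (by positivity)
  · rw [hlhn]; nlinarith [mul_pos hlh1 hlam2]
  · rw [hlhn]
    linear_combination (norm := skip) (lh1 * lam2 / 2 * (2 * lam2 * lamn)) * hquad
    field_simp
    ring
  all_goals positivity

/-- **Maximizer of the limiting condition function.** With `u = λ̂ₙ²/(λ₂ λ̂₁)` and
`β* = 2u + √(4u² + λₙ/(2λ₂) + 3u)`, the function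
`F∞(β) = (λ̂₁/2 - λ̂ₙ²/(βλ₂)) / (3λₙ + 2βλₙ + λₙ²/(βλ₂))` satisfies `F∞(β) ≤ F∞(β*)`
for every `β > 0`. -/
theorem limiting_condition_function_maximizer
    (lam2 lamn lh1 lhn : ℝ)
    (hlam2 : 0 < lam2) (hlamn : 0 < lamn) (hlh1 : 0 < lh1) (hlhn : 0 < lhn)
    (u βstar : ℝ)
    (hu : u = lhn ^ 2 / (lam2 * lh1))
    (hβstar : βstar = 2 * u + Real.sqrt (4 * u ^ 2 + lamn / (2 * lam2) + 3 * u)) :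
    ∀ β : ℝ, 0 < β →
      (lh1 / 2 - lhn ^ 2 / (β * lam2)) / (3 * lamn + 2 * β * lamn + lamn ^ 2 / (β * lam2))
        ≤ (lh1 / 2 - lhn ^ 2 / (βstar * lam2)) /
            (3 * lamn + 2 * βstar * lamn + lamn ^ 2 / (βstar * lam2)) :=
  limiting_condition_function_maximizer_general lam2 lamn lh1 lhn hlam2 hlamn hlh1 u βstar hu hβstar
end

section
/- Optimality conditions (analogue of Lemma 2). Suppose each f_i : ℝ^d → ℝ is differentiable and v_i-strongly convex with v_i > 0, let x̄* be the (unique) global minimizer of Σ_{i=1}^n f_i, let x* ∈ ℝ^{nd} stack n copies of x̄*, and let ∇f(x*) stack the gradients (∇f_1(x̄*),…,∇f_n(x̄*)). Let G be an undirected connected graph on n vertices without self-loops with signed Laplacian L = D − W, and let M be any real matrix with MᵀM = 2L, acting blockwise on ℝ^{nd}. Then: (i) there exists φ* in the range of L⊗I_d with ∇f(x*) + φ* = 0; (ii) M x* = 0 (blockwise); and (iii) there exists a unique μ* in the range of M (blockwise) with φ* = Mᵀ μ*. -/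
open scoped RealInnerProductSpace BigOperators
open Matrix

noncomputable section

/-! At the minimizer the gradients sum to zero. The Laplacian of a connected graph is symmetric
with kernel the constant vectors, so its range is exactly the zero-sum vectors; applied
coordinatewise this writes `φ* = -∇f(x*)` as `L z`. Since `ker (MᵀM) = ker M`, the identity
`MᵀM = 2L` gives `M x* = 0` and makes `Mᵀ` injective on the range of `M`, so `μ* = M (z / 2)` is
the unique preimage of `φ*` there. -/

theorem IsLocalMin.sum_gradient_eq_zero {ι E : Type*} [NormedAddCommGroup E]
    [InnerProductSpace ℝ E] [CompleteSpace E] {f : ι → E → ℝ} {s : Finset ι} {a : E}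
    (h : IsLocalMin (fun x => ∑ i ∈ s, f i x) a) (hf : ∀ i ∈ s, DifferentiableAt ℝ (f i) a) :
    ∑ i ∈ s, gradient (f i) a = 0 := by
  have h₀ := h.fderiv_eq_zero
  rw [fderiv_fun_sum hf] at h₀
  simp only [gradient, ← map_sum, h₀, map_zero]

theorem SimpleGraph.Connected.exists_lapMatrix_mulVec_eq {V : Type*} [Fintype V] [DecidableEq V]
    {G : SimpleGraph V} [DecidableRel G.Adj] (hG : G.Connected) {w : V → ℝ}
    (hw : ∑ i, w i = 0) : ∃ u, G.lapMatrix ℝ *ᵥ u = w := by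
  have hsymm : (G.lapMatrix ℝ).toEuclideanLin.IsSymmetric :=
    isSymmetric_toEuclideanLin_iff.mpr (G.isHermitian_lapMatrix (R := ℝ))
  obtain ⟨u, hu⟩ : WithLp.toLp 2 w ∈ LinearMap.range (G.lapMatrix ℝ).toEuclideanLin := by
    rw [← Submodule.orthogonal_orthogonal (LinearMap.range _), hsymm.orthogonal_range,
      Submodule.mem_orthogonal]
    intro v hv
    obtain ⟨i₀⟩ := hG.nonempty
    have hconst : ∀ i, v i = v i₀ := fun i =>
      G.lapMatrix_mulVec_eq_zero_iff_forall_reachable.mp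
        (by simpa using congrArg WithLp.ofLp hv) i i₀ (hG.preconnected i i₀)
    simp [EuclideanSpace.inner_eq_star_dotProduct, dotProduct, hconst, ← Finset.sum_mul, hw]
  exact ⟨u.ofLp, by simpa using congrArg WithLp.ofLp hu⟩

section BlockMul

variable {m n p d : ℕ}

theorem blockMul_apply_apply (A : Matrix (Fin m) (Fin n) ℝ)
    (z : Fin n → EuclideanSpace ℝ (Fin d)) (i : Fin m) (k : Fin d) :
    blockMul A z i k = (A *ᵥ fun j => z j k) i := by
  simp [blockMul, mulVec, dotProduct]

theorem blockMul_mul (A : Matrix (Fin m) (Fin n) ℝ) (B : Matrix (Fin n) (Fin p) ℝ)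
    (z : Fin p → EuclideanSpace ℝ (Fin d)) :
    blockMul (A * B) z = blockMul A (blockMul B z) := by
  funext i
  simp only [blockMul, mul_apply, Finset.smul_sum, smul_smul, Finset.sum_smul]
  exact Finset.sum_comm

theorem blockMul_smul (c : ℝ) (A : Matrix (Fin m) (Fin n) ℝ)
    (z : Fin n → EuclideanSpace ℝ (Fin d)) : blockMul (c • A) z = blockMul A (c • z) := by
  funext i
  simp only [blockMul, Matrix.smul_apply, Pi.smul_apply, smul_eq_mul, mul_comm c, mul_smul]

theorem blockMul_sub (A : Matrix (Fin m) (Fin n) ℝ) (z w : Fin n → EuclideanSpace ℝ (Fin d)) :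
    blockMul A (z - w) = blockMul A z - blockMul A w := by
  funext i
  simp only [blockMul, Pi.sub_apply, smul_sub, Finset.sum_sub_distrib]

theorem blockMul_const (A : Matrix (Fin m) (Fin n) ℝ) (x : EuclideanSpace ℝ (Fin d)) :
    blockMul A (fun _ => x) = fun i => (A *ᵥ fun _ => 1) i • x := by
  funext i
  simp [blockMul, mulVec, dotProduct, Finset.sum_smul]

theorem blockMul_eq_zero_of_blockMul_transpose_mul_self_eq_zero
    {A : Matrix (Fin m) (Fin n) ℝ} {z : Fin n → EuclideanSpace ℝ (Fin d)}
    (h : blockMul (Aᵀ * A) z = 0) : blockMul A z = 0 := by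
  funext i
  ext k
  have hk : (fun j => z j k) ∈ LinearMap.ker (Aᵀ * A).mulVecLin := by
    ext i'
    rw [mulVecLin_apply, ← blockMul_apply_apply, h]
    rfl
  rw [ker_mulVecLin_transpose_mul_self, LinearMap.mem_ker, mulVecLin_apply] at hk
  simp [blockMul_apply_apply, hk]

theorem injOn_blockMul_transpose_range (A : Matrix (Fin m) (Fin n) ℝ) :
    Set.InjOn (blockMul (d := d) Aᵀ) (Set.range (blockMul A)) := by
  rintro _ ⟨z, rfl⟩ _ ⟨w, rfl⟩ h
  rw [← sub_eq_zero, ← blockMul_sub]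
  apply blockMul_eq_zero_of_blockMul_transpose_mul_self_eq_zero
  rw [blockMul_mul, blockMul_sub, blockMul_sub, h, sub_self]

end BlockMul

section SignedLaplacian

variable {n d : ℕ} {G : SimpleGraph (Fin n)} [DecidableRel G.Adj]

theorem signedLap_eq_lapMatrix : signedLap G = G.lapMatrix ℝ := rfl

theorem blockMul_signedLap_const (x : EuclideanSpace ℝ (Fin d)) :
    blockMul (signedLap G) (fun _ => x) = 0 := by
  rw [blockMul_const, signedLap_eq_lapMatrix, G.lapMatrix_mulVec_const_eq_zero]
  funext i
  exact zero_smul ℝ x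

theorem SimpleGraph.Connected.exists_blockMul_signedLap_eq (hG : G.Connected)
    {w : Fin n → EuclideanSpace ℝ (Fin d)} (hw : ∑ i, w i = 0) :
    ∃ z, blockMul (signedLap G) z = w := by
  have hcoord (k : Fin d) : ∃ u, G.lapMatrix ℝ *ᵥ u = fun i => w i k :=
    hG.exists_lapMatrix_mulVec_eq (by simpa using congrArg (fun v => v k) hw)
  choose u hu using hcoord
  refine ⟨fun j => WithLp.toLp 2 fun k => u k j, funext fun i => ?_⟩
  ext k
  rw [blockMul_apply_apply]
  exact congrFun (hu k) i

end SignedLaplacian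

theorem ccdqm_optimality_conditions_general
    {n m d : ℕ} (G : SimpleGraph (Fin n)) [DecidableRel G.Adj] (hconn : G.Connected)
    (f : Fin n → EuclideanSpace ℝ (Fin d) → ℝ)
    (hdiff : ∀ i, Differentiable ℝ (f i))
    (xbar : EuclideanSpace ℝ (Fin d))
    (hmin : ∀ z, ∑ i, f i xbar ≤ ∑ i, f i z)
    (M : Matrix (Fin m) (Fin n) ℝ) (hM : Mᵀ * M = (2 : ℝ) • signedLap G) :
    (∃ φstar : Fin n → EuclideanSpace ℝ (Fin d),
      (∃ z, blockMul (signedLap G) z = φstar) ∧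
      (∀ i, gradient (f i) xbar + φstar i = 0) ∧
      (∃! μstar : Fin m → EuclideanSpace ℝ (Fin d),
        (∃ z, μstar = blockMul M z) ∧ φstar = blockMul Mᵀ μstar)) ∧
    blockMul M (fun _ => xbar) = 0 := by
  have hgrad : ∑ i, gradient (f i) xbar = 0 :=
    IsLocalMin.sum_gradient_eq_zero (Filter.Eventually.of_forall hmin)
      fun i _ => (hdiff i).differentiableAt
  obtain ⟨z, hz⟩ := hconn.exists_blockMul_signedLap_eq (w := fun i => -gradient (f i) xbar)
    (by simp [Finset.sum_neg_distrib, hgrad])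
  have hμ : blockMul Mᵀ (blockMul M ((2 : ℝ)⁻¹ • z)) = blockMul (signedLap G) z := by
    rw [← blockMul_mul, hM, blockMul_smul, smul_smul, mul_inv_cancel₀ two_ne_zero, one_smul]
  refine ⟨⟨_, ⟨z, hz⟩, fun i => add_neg_cancel _, blockMul M ((2 : ℝ)⁻¹ • z),
    ⟨⟨_, rfl⟩, by rw [hμ, hz]⟩, ?_⟩, ?_⟩
  · rintro _ ⟨⟨z', rfl⟩, hz'⟩
    exact injOn_blockMul_transpose_range M ⟨z', rfl⟩ ⟨_, rfl⟩ (hz'.symm.trans (hμ.trans hz).symm)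
  · apply blockMul_eq_zero_of_blockMul_transpose_mul_self_eq_zero
    rw [hM, blockMul_smul]
    exact blockMul_signedLap_const _

/-- **Optimality conditions** (analogue of Lemma 2). For strongly convex `f_i`, a
connected graph with Laplacian `L`, and any `M` with `MᵀM = 2L` (acting blockwise):
(i) there is `φ*` in the range of `L ⊗ I_d` with `∇f(x*) + φ* = 0`;
(ii) `M x* = 0` for the consensus vector `x*` stacking copies of the minimizer; and
(iii) there is a unique `μ*` in the blockwise range of `M` with `φ* = Mᵀ μ*`. -/
theorem ccdqm_optimality_conditions
    {n m d : ℕ} (G : SimpleGraph (Fin n)) [DecidableRel G.Adj] (hconn : G.Connected)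
    (f : Fin n → EuclideanSpace ℝ (Fin d) → ℝ) (vi : Fin n → ℝ)
    (hvi : ∀ i, 0 < vi i)
    (hdiff : ∀ i, Differentiable ℝ (f i))
    (hsc : ∀ i x x', vi i * ‖x' - x‖ ^ 2 ≤ ⟪gradient (f i) x' - gradient (f i) x, x' - x⟫)
    (xbar : EuclideanSpace ℝ (Fin d))
    (hmin : ∀ z, ∑ i, f i xbar ≤ ∑ i, f i z)
    (M : Matrix (Fin m) (Fin n) ℝ) (hM : Mᵀ * M = (2 : ℝ) • signedLap G) :
    (∃ φstar : Fin n → EuclideanSpace ℝ (Fin d),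
      (∃ z, blockMul (signedLap G) z = φstar) ∧
      (∀ i, gradient (f i) xbar + φstar i = 0) ∧
      (∃! μstar : Fin m → EuclideanSpace ℝ (Fin d),
        (∃ z, μstar = blockMul M z) ∧ φstar = blockMul Mᵀ μstar)) ∧
    blockMul M (fun _ => xbar) = 0 :=
  ccdqm_optimality_conditions_general G hconn f hdiff xbar hmin M hM
end
end
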